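/- Let β₁ ∈ ℝ, β₂ ≤ 0, p = e^{2β₁}/(1+e^{2β₁}), and define for symmetric measurable h : [0,1]² → [0,1]: T(h) - I(h) = β₂·t(K₃,h) - I_p(h) - (1/2)log(1-p), where t(K₃,h) = ∫∫∫ h(x,y)h(y,z)h(z,x) dx dy dz. If h maximizes T - I over all such functions, then h(x,y) ≤ p for almost every (x,y). -/
import Mathlib

open MeasureTheory

noncomputable def Irate (p u : ℝ) : ℝ :=
  (1 / 2) * u * Real.log (u / p) + (1 / 2) * (1 - u) * Real.log ((1 - u) / (1 - p))

lemma mul_log_div_gt (x y : ℝ) (hx : 0 ≤ x) (hy : 0 < y) (hxy : x ≠ y) :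
    x - y < x * Real.log (x / y) := by
  rcases eq_or_lt_of_le hx with h0 | h0
  · simp [← h0]; linarith
  · have hne : y / x ≠ 1 := by
      intro hc
      apply hxy
      field_simp at hc
      linarith
    have h1 : Real.log (y / x) < y / x - 1 :=
      Real.log_lt_sub_one_of_pos (by positivity) hne
    have h2 : Real.log (x / y) = - Real.log (y / x) := by
      rw [← Real.log_inv]
      congr 1
      field_simp
    have h3 : x * (y / x) = y := by field_simp
    nlinarith [mul_lt_mul_of_pos_left h1 h0]

lemma Irate_self (p : ℝ) (hp0 : 0 < p) (hp1 : p < 1) : Irate p p = 0 := by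
  unfold Irate
  rw [div_self hp0.ne', div_self (by linarith : (1 : ℝ) - p ≠ 0), Real.log_one]
  ring

lemma Irate_pos (p u : ℝ) (hp0 : 0 < p) (hp1 : p < 1) (hu0 : 0 ≤ u) (hu1 : u ≤ 1)
    (hne : u ≠ p) : 0 < Irate p u := by
  have h1 := mul_log_div_gt u p hu0 hp0 hne
  have h2 := mul_log_div_gt (1 - u) (1 - p) (by linarith) (by linarith)
    (fun hc => hne (by linarith))
  unfold Irate
  nlinarith

lemma Irate_nonneg (p u : ℝ) (hp0 : 0 < p) (hp1 : p < 1) (hu0 : 0 ≤ u) (hu1 : u ≤ 1) :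
    0 ≤ Irate p u := by
  rcases eq_or_ne u p with heq | hne
  · rw [heq, Irate_self p hp0 hp1]
  · exact (Irate_pos p u hp0 hp1 hu0 hu1 hne).le

lemma aux_bound (x y : ℝ) (hx0 : 0 ≤ x) (hx1 : x ≤ 1) (hy : 0 < y) :
    |x * Real.log (x / y)| ≤ 1 + |Real.log y| := by
  rcases eq_or_lt_of_le hx0 with h | h
  · rw [← h]
    simp
    positivity
  · have hlx : Real.log (x / y) = Real.log x - Real.log y := Real.log_div h.ne' hy.ne'
    have h1 : Real.log x⁻¹ ≤ x⁻¹ - 1 := Real.log_le_sub_one_of_pos (by positivity)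
    rw [Real.log_inv] at h1
    have hlogx : Real.log x ≤ 0 := Real.log_nonpos hx0 hx1
    have hxi : x * x⁻¹ = 1 := mul_inv_cancel₀ h.ne'
    have hxl : x * |Real.log x| ≤ 1 := by
      rw [abs_of_nonpos hlogx]
      nlinarith [mul_le_mul_of_nonneg_left h1 hx0]
    calc |x * Real.log (x / y)| = x * |Real.log x - Real.log y| := by
          rw [hlx, abs_mul, abs_of_nonneg hx0]
      _ ≤ x * (|Real.log x| + |Real.log y|) := by
          gcongr
          exact abs_sub _ _
      _ = x * |Real.log x| + x * |Real.log y| := by ring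
      _ ≤ 1 + 1 * |Real.log y| := by
          gcongr
      _ = 1 + |Real.log y| := by ring

lemma abs_Irate_le (p u : ℝ) (hp0 : 0 < p) (hp1 : p < 1) (hu0 : 0 ≤ u) (hu1 : u ≤ 1) :
    |Irate p u| ≤ 1 + |Real.log p| + |Real.log (1 - p)| := by
  have hA := aux_bound u p hu0 hu1 hp0
  have hB := aux_bound (1 - u) (1 - p) (by linarith) (by linarith) (by linarith)
  unfold Irate
  have e1 : |(1 / 2 : ℝ) * u * Real.log (u / p)| = (1 / 2) * |u * Real.log (u / p)| := by
    rw [mul_assoc, abs_mul]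
    norm_num
  have e2 : |(1 / 2 : ℝ) * (1 - u) * Real.log ((1 - u) / (1 - p))|
      = (1 / 2) * |(1 - u) * Real.log ((1 - u) / (1 - p))| := by
    rw [mul_assoc, abs_mul]
    norm_num
  calc |(1 / 2 : ℝ) * u * Real.log (u / p) + 1 / 2 * (1 - u) * Real.log ((1 - u) / (1 - p))|
      ≤ |(1 / 2 : ℝ) * u * Real.log (u / p)| + |1 / 2 * (1 - u) * Real.log ((1 - u) / (1 - p))| :=
        abs_add_le _ _
    _ = (1 / 2) * |u * Real.log (u / p)| + (1 / 2) * |(1 - u) * Real.log ((1 - u) / (1 - p))| := by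
        rw [e1, e2]
    _ ≤ 1 + |Real.log p| + |Real.log (1 - p)| := by
        have := abs_nonneg (Real.log p)
        have := abs_nonneg (Real.log (1 - p))
        linarith

lemma measurable_Irate (p : ℝ) : Measurable (Irate p) := by
  unfold Irate
  have m1 : Measurable fun u : ℝ => Real.log (u / p) :=
    Real.measurable_log.comp (measurable_id.div_const p)
  have m2 : Measurable fun u : ℝ => Real.log ((1 - u) / (1 - p)) :=
    Real.measurable_log.comp ((measurable_const.sub measurable_id).div_const (1 - p))
  exact ((measurable_const.mul measurable_id).mul m1).add
    ((measurable_const.mul (measurable_const.sub measurable_id)).mul m2)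

lemma integrable_of_bound {α : Type*} [MeasurableSpace α] {μ : Measure α} [IsFiniteMeasure μ]
    {f : α → ℝ} {C : ℝ} (hf : Measurable f) (hb : ∀ x, |f x| ≤ C) : Integrable f μ :=
  (integrable_const C).mono' hf.aestronglyMeasurable
    (Filter.Eventually.of_forall fun x => by simpa using hb x)

theorem maximizer_le_p (β₁ β₂ : ℝ) (hβ₂ : β₂ ≤ 0) (p : ℝ)
    (hp : p = Real.exp (2 * β₁) / (1 + Real.exp (2 * β₁)))
    (F : (ℝ → ℝ → ℝ) → ℝ)
    (hF : ∀ g : ℝ → ℝ → ℝ, F g =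
      β₂ * (∫ x : Fin 3 → ℝ, g (x 0) (x 1) * g (x 1) (x 2) * g (x 2) (x 0)
        ∂(Measure.pi fun _ : Fin 3 => volume.restrict (Set.Icc (0 : ℝ) 1)))
      - (∫ q : ℝ × ℝ, Irate p (g q.1 q.2)
        ∂((volume.restrict (Set.Icc (0 : ℝ) 1)).prod (volume.restrict (Set.Icc (0 : ℝ) 1))))
      - (1 / 2) * Real.log (1 - p))
    (h : ℝ → ℝ → ℝ) (hmeas : Measurable (Function.uncurry h))
    (hsymm : ∀ x y, h x y = h y x) (hrange : ∀ x y, h x y ∈ Set.Icc (0 : ℝ) 1)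
    (hmax : ∀ g : ℝ → ℝ → ℝ, Measurable (Function.uncurry g) →
      (∀ x y, g x y = g y x) → (∀ x y, g x y ∈ Set.Icc (0 : ℝ) 1) → F g ≤ F h) :
    ∀ᵐ q : ℝ × ℝ
      ∂((volume.restrict (Set.Icc (0 : ℝ) 1)).prod (volume.restrict (Set.Icc (0 : ℝ) 1))),
      h q.1 q.2 ≤ p := by
  have he : 0 < Real.exp (2 * β₁) := Real.exp_pos _
  have hp0 : 0 < p := by rw [hp]; positivity
  have hp1 : p < 1 := by
    rw [hp, div_lt_one (by positivity)]
    linarith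
  set μ := volume.restrict (Set.Icc (0 : ℝ) 1) with hμ
  haveI : IsFiniteMeasure μ := ⟨by simp [hμ, Real.volume_Icc]⟩
  set g : ℝ → ℝ → ℝ := fun x y => min (h x y) p with hg
  have hgmeas : Measurable (Function.uncurry g) := hmeas.min measurable_const
  have hgsymm : ∀ x y, g x y = g y x := fun x y => by simp [hg, hsymm x y]
  have hgrange : ∀ x y, g x y ∈ Set.Icc (0 : ℝ) 1 := by
    intro x y
    obtain ⟨h0, h1⟩ := hrange x y
    exact ⟨le_min h0 hp0.le, min_le_of_left_le h1⟩
  -- measurability of integrands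
  have m01 : Measurable fun x : Fin 3 → ℝ => (x 0, x 1) :=
    (measurable_pi_apply 0).prodMk (measurable_pi_apply 1)
  have m12 : Measurable fun x : Fin 3 → ℝ => (x 1, x 2) :=
    (measurable_pi_apply 1).prodMk (measurable_pi_apply 2)
  have m20 : Measurable fun x : Fin 3 → ℝ => (x 2, x 0) :=
    (measurable_pi_apply 2).prodMk (measurable_pi_apply 0)
  have mh3 : Measurable fun x : Fin 3 → ℝ => h (x 0) (x 1) * h (x 1) (x 2) * h (x 2) (x 0) :=
    ((hmeas.comp m01).mul (hmeas.comp m12)).mul (hmeas.comp m20)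
  have mg3 : Measurable fun x : Fin 3 → ℝ => g (x 0) (x 1) * g (x 1) (x 2) * g (x 2) (x 0) :=
    ((hgmeas.comp m01).mul (hgmeas.comp m12)).mul (hgmeas.comp m20)
  have prod_mem : ∀ (f : ℝ → ℝ → ℝ), (∀ x y, f x y ∈ Set.Icc (0 : ℝ) 1) →
      ∀ x : Fin 3 → ℝ, f (x 0) (x 1) * f (x 1) (x 2) * f (x 2) (x 0) ∈ Set.Icc (0 : ℝ) 1 := by
    intro f hf x
    obtain ⟨a0, a1⟩ := hf (x 0) (x 1)
    obtain ⟨b0, b1⟩ := hf (x 1) (x 2)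
    obtain ⟨c0, c1⟩ := hf (x 2) (x 0)
    constructor
    · positivity
    · calc f (x 0) (x 1) * f (x 1) (x 2) * f (x 2) (x 0) ≤ 1 * 1 * 1 := by gcongr
        _ = 1 := by norm_num
  have ih3 : Integrable (fun x : Fin 3 → ℝ => h (x 0) (x 1) * h (x 1) (x 2) * h (x 2) (x 0))
      (Measure.pi fun _ : Fin 3 => μ) := by
    refine integrable_of_bound (C := 1) mh3 fun x => ?_
    obtain ⟨a, b⟩ := prod_mem h hrange x
    rw [abs_of_nonneg a]; exact b
  have ig3 : Integrable (fun x : Fin 3 → ℝ => g (x 0) (x 1) * g (x 1) (x 2) * g (x 2) (x 0))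
      (Measure.pi fun _ : Fin 3 => μ) := by
    refine integrable_of_bound (C := 1) mg3 fun x => ?_
    obtain ⟨a, b⟩ := prod_mem g hgrange x
    rw [abs_of_nonneg a]; exact b
  have tmono : (∫ x : Fin 3 → ℝ, g (x 0) (x 1) * g (x 1) (x 2) * g (x 2) (x 0)
        ∂(Measure.pi fun _ : Fin 3 => μ))
      ≤ ∫ x : Fin 3 → ℝ, h (x 0) (x 1) * h (x 1) (x 2) * h (x 2) (x 0)
        ∂(Measure.pi fun _ : Fin 3 => μ) := by
    refine integral_mono ig3 ih3 fun x => ?_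
    have le01 : ∀ a b : ℝ, g a b ≤ h a b := fun a b => min_le_left _ _
    obtain ⟨a0, _⟩ := hgrange (x 0) (x 1)
    obtain ⟨b0, _⟩ := hgrange (x 1) (x 2)
    obtain ⟨c0, _⟩ := hgrange (x 2) (x 0)
    obtain ⟨a0', _⟩ := hrange (x 0) (x 1)
    obtain ⟨b0', _⟩ := hrange (x 1) (x 2)
    gcongr
    exacts [le01 _ _, le01 _ _, le01 _ _]
  -- Irate integrands
  have mφh : Measurable fun q : ℝ × ℝ => Irate p (h q.1 q.2) :=
    (measurable_Irate p).comp hmeas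
  have mφg : Measurable fun q : ℝ × ℝ => Irate p (g q.1 q.2) :=
    (measurable_Irate p).comp hgmeas
  have iφh : Integrable (fun q : ℝ × ℝ => Irate p (h q.1 q.2)) (μ.prod μ) := by
    refine integrable_of_bound (C := 1 + |Real.log p| + |Real.log (1 - p)|) mφh fun q => ?_
    exact abs_Irate_le p _ hp0 hp1 (hrange q.1 q.2).1 (hrange q.1 q.2).2
  have iφg : Integrable (fun q : ℝ × ℝ => Irate p (g q.1 q.2)) (μ.prod μ) := by
    refine integrable_of_bound (C := 1 + |Real.log p| + |Real.log (1 - p)|) mφg fun q => ?_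
    exact abs_Irate_le p _ hp0 hp1 (hgrange q.1 q.2).1 (hgrange q.1 q.2).2
  -- pointwise comparison of Irate
  have φmono : ∀ q : ℝ × ℝ, Irate p (g q.1 q.2) ≤ Irate p (h q.1 q.2) := by
    intro q
    rcases le_or_gt (h q.1 q.2) p with hle | hlt
    · have : g q.1 q.2 = h q.1 q.2 := min_eq_left hle
      rw [this]
    · have hgq : g q.1 q.2 = p := min_eq_right hlt.le
      rw [hgq, Irate_self p hp0 hp1]
      exact Irate_nonneg p _ hp0 hp1 (hrange q.1 q.2).1 (hrange q.1 q.2).2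
  -- use maximality
  have hFg := hmax g hgmeas hgsymm hgrange
  rw [hF g, hF h] at hFg
  have hsub : (∫ q : ℝ × ℝ, (Irate p (h q.1 q.2) - Irate p (g q.1 q.2)) ∂(μ.prod μ))
      = (∫ q : ℝ × ℝ, Irate p (h q.1 q.2) ∂(μ.prod μ))
        - ∫ q : ℝ × ℝ, Irate p (g q.1 q.2) ∂(μ.prod μ) := integral_sub iφh iφg
  have hβt : β₂ * (∫ x : Fin 3 → ℝ, h (x 0) (x 1) * h (x 1) (x 2) * h (x 2) (x 0)
        ∂(Measure.pi fun _ : Fin 3 => μ))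
      ≤ β₂ * ∫ x : Fin 3 → ℝ, g (x 0) (x 1) * g (x 1) (x 2) * g (x 2) (x 0)
        ∂(Measure.pi fun _ : Fin 3 => μ) :=
    mul_le_mul_of_nonpos_left tmono hβ₂
  have hzero : (∫ q : ℝ × ℝ, (Irate p (h q.1 q.2) - Irate p (g q.1 q.2)) ∂(μ.prod μ)) = 0 := by
    have hle : (∫ q : ℝ × ℝ, (Irate p (h q.1 q.2) - Irate p (g q.1 q.2)) ∂(μ.prod μ)) ≤ 0 := by
      rw [hsub]; linarith
    have hge : 0 ≤ ∫ q : ℝ × ℝ, (Irate p (h q.1 q.2) - Irate p (g q.1 q.2)) ∂(μ.prod μ) :=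
      integral_nonneg fun q => sub_nonneg.2 (φmono q)
    linarith
  have hae : (fun q : ℝ × ℝ => Irate p (h q.1 q.2) - Irate p (g q.1 q.2)) =ᵐ[μ.prod μ] 0 :=
    (integral_eq_zero_iff_of_nonneg (fun q => sub_nonneg.2 (φmono q)) (iφh.sub iφg)).1 hzero
  filter_upwards [hae] with q hq
  by_contra hgt
  push_neg at hgt
  have hgq : g q.1 q.2 = p := min_eq_right hgt.le
  have h1 : Irate p (g q.1 q.2) = 0 := by rw [hgq, Irate_self p hp0 hp1]
  have h2 : 0 < Irate p (h q.1 q.2) :=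
    Irate_pos p _ hp0 hp1 (hrange q.1 q.2).1 (hrange q.1 q.2).2 (ne_of_gt hgt)
  simp only [Pi.zero_apply] at hq
  linarith
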